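/- arXiv:1909.04197 — 4 statements merged into one kernel-verified Lean document; each statement's English description precedes it below -/
import Mathlib

section
/- If a1, a2, b0, d3 are nonzero complex numbers with a1·a2 + b0·d3 = 0, then (|a2|² + |b0|²)·(|a2|² + |d3|²) > 0; consequently the two complex numbers a1²·a2² + a1·a2·b0·d3 and −a1·a2·b0²·conj(b0)·d3 + |a1|²·b0²·d3² + |a2|²·b0²·d3² − a1·a2·b0·d3²·conj(d3) cannot both be zero unless one of a1, a2, b0, d3 vanishes. -/
/-!
Substituting `a1 * a2 = -(b0 * d3)` and using `z * conj z = ‖z‖ ^ 2`, the second expression becomes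
`(‖a1‖² + ‖a2‖² + ‖b0‖² + ‖d3‖²) * b0² * d3²`, a positive real times a nonzero complex number.
-/

open Complex

theorem Complex.eq_sum_sq_norm_mul_of_mul_add_mul_eq_zero {a1 a2 b0 d3 : ℂ}
    (h : a1 * a2 + b0 * d3 = 0) :
    -(a1 * a2 * b0 ^ 2 * (starRingEnd ℂ) b0 * d3)
        + (‖a1‖ : ℂ) ^ 2 * b0 ^ 2 * d3 ^ 2
        + (‖a2‖ : ℂ) ^ 2 * b0 ^ 2 * d3 ^ 2
        - a1 * a2 * b0 * d3 ^ 2 * (starRingEnd ℂ) d3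
      = ((‖a1‖ ^ 2 + ‖a2‖ ^ 2 + ‖b0‖ ^ 2 + ‖d3‖ ^ 2 : ℝ) : ℂ) * (b0 ^ 2 * d3 ^ 2) := by
  push_cast
  linear_combination (-(b0 ^ 2 * (starRingEnd ℂ) b0 * d3) - b0 * d3 ^ 2 * (starRingEnd ℂ) d3) * h
    + b0 ^ 2 * d3 ^ 2 * mul_conj' b0 + b0 ^ 2 * d3 ^ 2 * mul_conj' d3

theorem stmt_4_general (a1 a2 b0 d3 : ℂ)
    (hb0 : b0 ≠ 0) (hd3 : d3 ≠ 0)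
    (h : a1 * a2 + b0 * d3 = 0) :
    0 < ((‖a2‖) ^ 2 + (‖b0‖) ^ 2)
        * ((‖a2‖) ^ 2 + (‖d3‖) ^ 2)
    ∧ ¬ (a1 ^ 2 * a2 ^ 2 + a1 * a2 * b0 * d3 = 0
        ∧ -(a1 * a2 * b0 ^ 2 * (starRingEnd ℂ) b0 * d3)
            + (‖a1‖ : ℂ) ^ 2 * b0 ^ 2 * d3 ^ 2
            + (‖a2‖ : ℂ) ^ 2 * b0 ^ 2 * d3 ^ 2
            - a1 * a2 * b0 * d3 ^ 2 * (starRingEnd ℂ) d3 = 0) := by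
  have hb0' : 0 < ‖b0‖ := norm_pos_iff.mpr hb0
  have hd3' : 0 < ‖d3‖ := norm_pos_iff.mpr hd3
  refine ⟨by positivity, ?_⟩
  rintro ⟨-, h2⟩
  rw [eq_sum_sq_norm_mul_of_mul_add_mul_eq_zero h] at h2
  have hsum : 0 < ‖a1‖ ^ 2 + ‖a2‖ ^ 2 + ‖b0‖ ^ 2 + ‖d3‖ ^ 2 := by positivity
  exact mul_ne_zero (ofReal_ne_zero.mpr hsum.ne') (by simp [hb0, hd3]) h2

/-- Key nonvanishing lemma for planar Case C4 with complex coefficients. -/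
theorem stmt_4 (a1 a2 b0 d3 : ℂ)
    (ha1 : a1 ≠ 0) (ha2 : a2 ≠ 0) (hb0 : b0 ≠ 0) (hd3 : d3 ≠ 0)
    (h : a1 * a2 + b0 * d3 = 0) :
    0 < ((‖a2‖) ^ 2 + (‖b0‖) ^ 2)
        * ((‖a2‖) ^ 2 + (‖d3‖) ^ 2)
    ∧ ¬ (a1 ^ 2 * a2 ^ 2 + a1 * a2 * b0 * d3 = 0
        ∧ -(a1 * a2 * b0 ^ 2 * (starRingEnd ℂ) b0 * d3)
            + (‖a1‖ : ℂ) ^ 2 * b0 ^ 2 * d3 ^ 2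
            + (‖a2‖ : ℂ) ^ 2 * b0 ^ 2 * d3 ^ 2
            - a1 * a2 * b0 * d3 ^ 2 * (starRingEnd ℂ) d3 = 0) :=
  stmt_4_general a1 a2 b0 d3 hb0 hd3 h
end

section
/- Let a1, a2, a3, b0 be nonzero complex numbers and a0 a real number, and define P_c(z1, z2, E) = −a3·E·z1²z2² − a1·E·z1²z2 − a2·E·z1z2² + (−|b0|² − a0·E + E²)·z1z2 − conj(a2)·E·z1 − conj(a1)·E·z2 − conj(a3)·E. Then P_c cannot be factored as (a11·z1z2 + a00)·(b11·z1z2 + b10·z1 + b01·z2 + b00) with complex coefficients for more than finitely many real values of E. -/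
open Complex Polynomial

/-!
Comparing coefficients in a factorization `(a₁₁ z₁z₂ + a₀₀)(b₁₁ z₁z₂ + b₁₀ z₁ + b₀₁ z₂ + b₀₀)`
of a biquadratic `∑ cᵢⱼ z₁ⁱ z₂ʲ` yields the relation `c₁₀ c₂₁ c₁₁ = c₂₁² c₀₀ + c₁₀² c₂₂`,
in which the coefficients of the factors no longer appear. For `P_c` this relation reads
`E² (a₁ ā₂ E² + (a₁² ā₃ + a₃ ā₂² - a₀ a₁ ā₂) E - a₁ ā₂ |b₀|²) = 0`, a nonzero polynomial
equation in `E` because `a₁ ā₂ ≠ 0`, so only finitely many energies admit a factorization.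
-/

theorem biquadratic_coeffs_eq_zero {K : Type*} [Field K] [CharZero K]
    {d₂₂ d₂₁ d₁₂ d₁₁ d₁₀ d₀₁ d₀₀ : K}
    (h : ∀ z₁ z₂ : K, d₂₂ * z₁ ^ 2 * z₂ ^ 2 + d₂₁ * z₁ ^ 2 * z₂ + d₁₂ * z₁ * z₂ ^ 2
      + d₁₁ * z₁ * z₂ + d₁₀ * z₁ + d₀₁ * z₂ + d₀₀ = 0) :
    d₂₂ = 0 ∧ d₂₁ = 0 ∧ d₁₂ = 0 ∧ d₁₁ = 0 ∧ d₁₀ = 0 ∧ d₀₁ = 0 ∧ d₀₀ = 0 := by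
  have h00 := h 0 0
  have h10 := h 1 0
  have h01 := h 0 1
  have h11 := h 1 1
  have h21 := h 2 1
  have h12 := h 1 2
  have h22 := h 2 2
  refine ⟨?_, ?_, ?_, ?_, ?_, ?_, ?_⟩
  · linear_combination (1/4 : K) * h22 - (1/2 : K) * h21 - (1/2 : K) * h12 + h11
      - (1/4 : K) * h00
  · linear_combination -(1/4 : K) * h22 + h21 + (1/2 : K) * h12 - 2 * h11
      + (1/2 : K) * h01 + (1/4 : K) * h00
  · linear_combination -(1/4 : K) * h22 + (1/2 : K) * h21 + h12 - 2 * h11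
      + (1/2 : K) * h10 + (1/4 : K) * h00
  · linear_combination (1/4 : K) * h22 - h21 - h12 + 4 * h11 - (3/2 : K) * h10
      - (3/2 : K) * h01 + (3/4 : K) * h00
  · linear_combination h10 - h00
  · linear_combination h01 - h00
  · linear_combination h00

theorem coeff_relation_of_forall_eq_mul {K : Type*} [Field K] [CharZero K]
    {c₂₂ c₂₁ c₁₂ c₁₁ c₁₀ c₀₁ c₀₀ a₁₁ a₀₀ b₁₁ b₁₀ b₀₁ b₀₀ : K}
    (h : ∀ z₁ z₂ : K, c₂₂ * z₁ ^ 2 * z₂ ^ 2 + c₂₁ * z₁ ^ 2 * z₂ + c₁₂ * z₁ * z₂ ^ 2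
      + c₁₁ * z₁ * z₂ + c₁₀ * z₁ + c₀₁ * z₂ + c₀₀
      = (a₁₁ * z₁ * z₂ + a₀₀) * (b₁₁ * z₁ * z₂ + b₁₀ * z₁ + b₀₁ * z₂ + b₀₀)) :
    c₁₀ * c₂₁ * c₁₁ = c₂₁ ^ 2 * c₀₀ + c₁₀ ^ 2 * c₂₂ := by
  obtain ⟨e₂₂, e₂₁, -, e₁₁, e₁₀, -, e₀₀⟩ :=
    biquadratic_coeffs_eq_zero (d₂₂ := c₂₂ - a₁₁ * b₁₁) (d₂₁ := c₂₁ - a₁₁ * b₁₀)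
      (d₁₂ := c₁₂ - a₁₁ * b₀₁) (d₁₁ := c₁₁ - (a₁₁ * b₀₀ + a₀₀ * b₁₁))
      (d₁₀ := c₁₀ - a₀₀ * b₁₀) (d₀₁ := c₀₁ - a₀₀ * b₀₁) (d₀₀ := c₀₀ - a₀₀ * b₀₀)
      fun z₁ z₂ => by linear_combination h z₁ z₂
  obtain rfl := sub_eq_zero.mp e₂₂
  obtain rfl := sub_eq_zero.mp e₂₁
  obtain rfl := sub_eq_zero.mp e₁₁
  obtain rfl := sub_eq_zero.mp e₁₀
  obtain rfl := sub_eq_zero.mp e₀₀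
  ring

theorem setOf_real_isRoot_finite {p : ℂ[X]} (hp : p ≠ 0) :
    {E : ℝ | p.IsRoot (E : ℂ)}.Finite :=
  (finite_setOfPred_isRoot hp).preimage Complex.ofReal_injective.injOn

theorem stmt_5_general (a1 a2 a3 b0 : ℂ) (a0 : ℝ)
    (ha1 : a1 ≠ 0) (ha2 : a2 ≠ 0) :
    {E : ℝ | ∃ a11 a00 b11 b10 b01 b00 : ℂ, ∀ z1 z2 : ℂ,
        -a3 * (E : ℂ) * z1 ^ 2 * z2 ^ 2 - a1 * (E : ℂ) * z1 ^ 2 * z2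
          - a2 * (E : ℂ) * z1 * z2 ^ 2
          + (-(‖b0‖ : ℂ) ^ 2 - (a0 : ℂ) * (E : ℂ) + (E : ℂ) ^ 2) * z1 * z2
          - (starRingEnd ℂ) a2 * (E : ℂ) * z1
          - (starRingEnd ℂ) a1 * (E : ℂ) * z2
          - (starRingEnd ℂ) a3 * (E : ℂ)
        = (a11 * z1 * z2 + a00) * (b11 * z1 * z2 + b10 * z1 + b01 * z2 + b00)}.Finite := by
  set q := starRingEnd ℂ a2
  have hlead : a1 * q ≠ 0 := mul_ne_zero ha1 ((_root_.map_ne_zero _).mpr ha2)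
  set quad : ℂ[X] := C (a1 * q) * X ^ 2
    + C (a1 ^ 2 * starRingEnd ℂ a3 + a3 * q ^ 2 - a0 * a1 * q) * X + C (-(a1 * q * ‖b0‖ ^ 2))
  have hquad : quad ≠ 0 := leadingCoeff_ne_zero.mp (by rwa [leadingCoeff_quadratic hlead])
  refine (setOf_real_isRoot_finite (mul_ne_zero (pow_ne_zero 2 X_ne_zero) hquad)).subset ?_
  rintro E ⟨a11, a00, b11, b10, b01, b00, hE⟩
  have hrel := coeff_relation_of_forall_eq_mul (K := ℂ) (c₂₂ := -a3 * E) (c₂₁ := -a1 * E)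
    (c₁₂ := -a2 * E) (c₁₁ := -(‖b0‖ : ℂ) ^ 2 - a0 * E + E ^ 2) (c₁₀ := -q * E)
    (c₀₁ := -(starRingEnd ℂ a1) * E) (c₀₀ := -(starRingEnd ℂ a3) * E)
    (a₁₁ := a11) (a₀₀ := a00) (b₁₁ := b11) (b₁₀ := b10) (b₀₁ := b01) (b₀₀ := b00)
    fun z₁ z₂ => by linear_combination hE z₁ z₂
  simp only [Set.mem_ofPred_eq, IsRoot, quad, eval_mul, eval_pow, eval_X, eval_add, eval_C]
  linear_combination hrel

/-- Case C5: the dispersion polynomial admits a factorization of the given shape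
for at most finitely many real energies E. -/
theorem stmt_5 (a1 a2 a3 b0 : ℂ) (a0 : ℝ)
    (ha1 : a1 ≠ 0) (ha2 : a2 ≠ 0) (ha3 : a3 ≠ 0) (hb0 : b0 ≠ 0) :
    {E : ℝ | ∃ a11 a00 b11 b10 b01 b00 : ℂ, ∀ z1 z2 : ℂ,
        -a3 * (E : ℂ) * z1 ^ 2 * z2 ^ 2 - a1 * (E : ℂ) * z1 ^ 2 * z2
          - a2 * (E : ℂ) * z1 * z2 ^ 2
          + (-(‖b0‖ : ℂ) ^ 2 - (a0 : ℂ) * (E : ℂ) + (E : ℂ) ^ 2) * z1 * z2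
          - (starRingEnd ℂ) a2 * (E : ℂ) * z1
          - (starRingEnd ℂ) a1 * (E : ℂ) * z2
          - (starRingEnd ℂ) a3 * (E : ℂ)
        = (a11 * z1 * z2 + a00) * (b11 * z1 * z2 + b10 * z1 + b01 * z2 + b00)}.Finite :=
  stmt_5_general a1 a2 a3 b0 a0 ha1 ha2
end

section
/- Let c : ℤ×ℤ → ℂ be the coefficients of a polynomial P_c = c_{2,2}z1²z2² + c_{2,1}z1²z2 + c_{1,2}z1z2² + c_{1,1}z1z2 + c_{1,0}z1 + c_{0,1}z2 + c_{0,0}. If P_c = (a_{1,1}z1z2 + a_{0,0})·(b_{1,1}z1z2 + b_{1,0}z1 + b_{0,1}z2 + b_{0,0}) for some complex coefficients, then c_{1,0}·c_{1,2} = c_{2,1}·c_{0,1}, c_{0,0}·c_{1,2}² − c_{1,1}·c_{1,2}·c_{0,1} + c_{2,2}·c_{0,1}² = 0, c_{0,0}·c_{2,1}·c_{1,2} − c_{1,0}·c_{1,1}·c_{1,2} + c_{1,0}·c_{2,2}·c_{0,1} = 0, and c_{0,0}·c_{2,1}² + c_{1,0}²·c_{2,2} − c_{1,0}·c_{2,1}·c_{1,1}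 = 0. -/
open Complex

/-!
Comparing coefficients of the two sides expresses every `c (m, n)` through the `a`'s and `b`'s;
after substitution the four identities hold in the polynomial ring in the `a`'s and `b`'s.
-/

theorem eq_zero_of_forall_quadratic_eq_zero {K : Type*} [Field K] [NeZero (2 : K)]
    (q : Fin 3 → K) (h : ∀ x : K, ∑ i, q i * x ^ (i : ℕ) = 0) : q = 0 := by
  have h0 := h 0
  have h1 := h 1
  have h2 := h (-1)
  simp only [Fin.sum_univ_three, Fin.val_zero, Fin.val_one, Fin.val_two] at h0 h1 h2
  have hq0 : q 0 = 0 := by simpa using h0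
  have two_q1 : 2 * q 1 = 0 := by linear_combination h1 - h2
  have hq1 : q 1 = 0 := (mul_eq_zero.mp two_q1).resolve_left two_ne_zero
  have hq2 : q 2 = 0 := by linear_combination h1 - hq0 - hq1
  funext i
  fin_cases i <;> assumption

theorem eq_zero_of_forall_biquadratic_eq_zero {K : Type*} [Field K] [NeZero (2 : K)]
    (p : Fin 3 → Fin 3 → K) (h : ∀ x y : K, ∑ i, ∑ j, p i j * x ^ (i : ℕ) * y ^ (j : ℕ) = 0) :
    p = 0 := by
  have hcol : ∀ x : K, ∀ j, ∑ i, p i j * x ^ (i : ℕ) = 0 := fun x =>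
    congrFun <| eq_zero_of_forall_quadratic_eq_zero _ fun y => by
      rw [← h x y, Finset.sum_comm]
      simp only [Finset.sum_mul]
  funext i j
  exact congrFun (eq_zero_of_forall_quadratic_eq_zero (p · j) (hcol · j)) i

/-- Elimination-ideal conditions on the coefficients necessary for a factorization
of the shape (a₁₁z₁z₂ + a₀₀)(b₁₁z₁z₂ + b₁₀z₁ + b₀₁z₂ + b₀₀). -/
theorem stmt_6 (c : ℤ × ℤ → ℂ) (a11 a00 b11 b10 b01 b00 : ℂ)
    (h : ∀ z1 z2 : ℂ,
      c (2,2) * z1 ^ 2 * z2 ^ 2 + c (2,1) * z1 ^ 2 * z2 + c (1,2) * z1 * z2 ^ 2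
        + c (1,1) * z1 * z2 + c (1,0) * z1 + c (0,1) * z2 + c (0,0)
      = (a11 * z1 * z2 + a00) * (b11 * z1 * z2 + b10 * z1 + b01 * z2 + b00)) :
    c (1,0) * c (1,2) = c (2,1) * c (0,1)
    ∧ c (0,0) * c (1,2) ^ 2 - c (1,1) * c (1,2) * c (0,1) + c (2,2) * c (0,1) ^ 2 = 0
    ∧ c (0,0) * c (2,1) * c (1,2) - c (1,0) * c (1,1) * c (1,2) + c (1,0) * c (2,2) * c (0,1) = 0
    ∧ c (0,0) * c (2,1) ^ 2 + c (1,0) ^ 2 * c (2,2) - c (1,0) * c (2,1) * c (1,1) = 0 := by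
  -- `d i j` is the coefficient of `z1 ^ i * z2 ^ j` in the difference of the two sides of `h`.
  let d : Fin 3 → Fin 3 → ℂ :=
    ![![c (0,0) - a00 * b00, c (0,1) - a00 * b01, 0],
      ![c (1,0) - a00 * b10, c (1,1) - (a11 * b00 + a00 * b11), c (1,2) - a11 * b01],
      ![0, c (2,1) - a11 * b10, c (2,2) - a11 * b11]]
  have hd : d = 0 := eq_zero_of_forall_biquadratic_eq_zero d fun x y => by
    simp only [d, Fin.sum_univ_three, Matrix.cons_val, Fin.val_zero, Fin.val_one, Fin.val_two]
    linear_combination h x y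
  have e00 : c (0,0) = a00 * b00 := sub_eq_zero.mp (congrFun₂ hd 0 0)
  have e01 : c (0,1) = a00 * b01 := sub_eq_zero.mp (congrFun₂ hd 0 1)
  have e10 : c (1,0) = a00 * b10 := sub_eq_zero.mp (congrFun₂ hd 1 0)
  have e11 : c (1,1) = a11 * b00 + a00 * b11 := sub_eq_zero.mp (congrFun₂ hd 1 1)
  have e12 : c (1,2) = a11 * b01 := sub_eq_zero.mp (congrFun₂ hd 1 2)
  have e21 : c (2,1) = a11 * b10 := sub_eq_zero.mp (congrFun₂ hd 2 1)
  have e22 : c (2,2) = a11 * b11 := sub_eq_zero.mp (congrFun₂ hd 2 2)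
  rw [e00, e01, e10, e11, e12, e21, e22]
  refine ⟨?_, ?_, ?_, ?_⟩ <;> ring
end

section
/- Let a1, a2, b0 be nonzero complex numbers, a0 real, and define P_c(z1,z2;E) = −conj(a2)·E·z1 − conj(a1)·E·z2 − a1·E·z1²z2 − a2·E·z1z2² + (−|b0|² − a0·E + E²)·z1z2. For every real E such that E ≠ 0 and the coefficient −|b0|² − a0E + E² ≠ 0 in a suitable sense, P_c is irreducible: it admits no factorization into two nonconstant polynomials in z1 and z2. -/
/-!
Total degree is additive for polynomials over a field and `P_c` has total degree at most three,
so in a factorization into two nonconstant factors one factor has total degree one: it is an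
affine function `a + b z₁ + c z₂`, and `P_c` would vanish on the whole line it cuts out. But
`P_c(z₁, 0) = c₁₀ z₁` and `P_c(0, z₂) = c₀₁ z₂` exclude vertical lines and lines missing the
origin, and on a line `z₂ = k z₁` the coefficient `c₁₁ k` of `z₁²` has to vanish, forcing `k = 0`.
-/

open Complex MvPolynomial

theorem MvPolynomial.eq_C_add_C_mul_X_add_C_mul_X_of_totalDegree_le_one {R : Type*}
    [CommSemiring R] {p : MvPolynomial (Fin 2) R} (hp : p.totalDegree ≤ 1) :
    p = C (coeff 0 p) + C (coeff (Finsupp.single 0 1) p) * X 0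
      + C (coeff (Finsupp.single 1 1) p) * X 1 := by
  ext d
  simp only [coeff_add, coeff_C, coeff_C_mul, coeff_X]
  by_cases hd : d 0 + d 1 ≤ 1
  · have hd_eq : d = Finsupp.single 0 (d 0) + Finsupp.single 1 (d 1) := by
      ext k; fin_cases k <;> simp
    rw [hd_eq]
    rcases (by omega : d 0 = 0 ∧ d 1 = 0 ∨ d 0 = 1 ∧ d 1 = 0 ∨ d 0 = 0 ∧ d 1 = 1) with h | h | h <;>
      simp [h, Finsupp.ext_iff, Fin.forall_fin_two]
  · have hcoeff : coeff d p = 0 := by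
      by_contra h
      have hdeg := (le_totalDegree (mem_support_iff.mpr h)).trans hp
      rw [Finsupp.sum_fintype _ _ (fun _ => rfl), Fin.sum_univ_two] at hdeg
      exact hd hdeg
    have hne (e : Fin 2 →₀ ℕ) (he : e 0 + e 1 ≤ 1) : e ≠ d := fun h => hd (h ▸ he)
    rw [hcoeff, if_neg (hne _ (by simp)), if_neg (hne _ (by simp)), if_neg (hne _ (by simp))]
    simp

section CaseC1

variable {K : Type*} [Field K]

/-- `P_c` with `X 0 = z₁`, `X 1 = z₂`, and `cᵢⱼ` the coefficient of `z₁ⁱ z₂ʲ`. -/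
noncomputable def caseC1Poly (c10 c01 c21 c12 c11 : K) : MvPolynomial (Fin 2) K :=
  C c10 * X 0 + C c01 * X 1 + C c21 * X 0 ^ 2 * X 1 + C c12 * X 0 * X 1 ^ 2 + C c11 * X 0 * X 1

theorem totalDegree_caseC1Poly_le (c10 c01 c21 c12 c11 : K) :
    (caseC1Poly c10 c01 c21 c12 c11).totalDegree ≤ 3 := by
  unfold caseC1Poly
  grw [totalDegree_add, totalDegree_add, totalDegree_add, totalDegree_add]
  simp only [max_le_iff]
  refine ⟨⟨⟨⟨?_, ?_⟩, ?_⟩, ?_⟩, ?_⟩ <;> grw [totalDegree_mul] <;> try grw [totalDegree_mul]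
  all_goals simp [totalDegree_C, totalDegree_X, totalDegree_X_pow]

@[simp]
theorem eval_caseC1Poly (c10 c01 c21 c12 c11 x y : K) :
    eval ![x, y] (caseC1Poly c10 c01 c21 c12 c11) =
      c10 * x + c01 * y + c21 * x ^ 2 * y + c12 * x * y ^ 2 + c11 * x * y := by
  simp [caseC1Poly]

variable {c10 c01 c11 : K} (c21 c12 : K)

theorem exists_eval_caseC1Poly_vertical_ne_zero (h10 : c10 ≠ 0) (h01 : c01 ≠ 0) (x₀ : K) :
    ∃ y, eval ![x₀, y] (caseC1Poly c10 c01 c21 c12 c11) ≠ 0 := by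
  by_contra! h
  have hx₀ : x₀ = 0 := by simpa [h10] using h 0
  simpa [hx₀] using h01 (by simpa [hx₀] using h 1)

theorem exists_eval_caseC1Poly_graph_ne_zero [NeZero (2 : K)] (h10 : c10 ≠ 0) (h01 : c01 ≠ 0)
    (h11 : c11 ≠ 0) (k m : K) : ∃ x, eval ![x, k * x + m] (caseC1Poly c10 c01 c21 c12 c11) ≠ 0 := by
  by_contra! h
  simp only [eval_caseC1Poly] at h
  have hm : m = 0 := by simpa [h01] using h 0
  subst hm
  -- the odd part of `x ↦ P_c(x, k x)` cancels between `x = 1` and `x = -1`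
  have hk : k = 0 := by
    have h2 : 2 * c11 * k = 0 := by linear_combination h 1 + h (-1)
    simpa [h11, two_ne_zero] using h2
  subst hk
  exact h10 (by simpa using h 1)

theorem totalDegree_ne_one_of_dvd_caseC1Poly [NeZero (2 : K)] (h10 : c10 ≠ 0) (h01 : c01 ≠ 0)
    (h11 : c11 ≠ 0) {F : MvPolynomial (Fin 2) K} (hF : F ∣ caseC1Poly c10 c01 c21 c12 c11) :
    F.totalDegree ≠ 1 := by
  intro hF1
  set a := coeff 0 F
  set b := coeff (Finsupp.single 0 1) F
  set c := coeff (Finsupp.single 1 1) F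
  have hF_eq : F = C a + C b * X 0 + C c * X 1 :=
    eq_C_add_C_mul_X_add_C_mul_X_of_totalDegree_le_one hF1.le
  have hbc : b ≠ 0 ∨ c ≠ 0 := by
    by_contra! h
    rw [h.1, h.2] at hF_eq
    simp [hF_eq] at hF1
  have hvanish (x y : K) (hxy : a + b * x + c * y = 0) :
      eval ![x, y] (caseC1Poly c10 c01 c21 c12 c11) = 0 := by
    have hFxy : eval ![x, y] F = 0 := by simp [hF_eq, hxy]
    exact zero_dvd_iff.mp (hFxy ▸ map_dvd (eval ![x, y]) hF)
  by_cases hc : c = 0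
  · have hb : b ≠ 0 := hbc.resolve_right (not_not.mpr hc)
    obtain ⟨y, hy⟩ := exists_eval_caseC1Poly_vertical_ne_zero c21 c12 h10 h01 (-a / b)
    exact hy (hvanish _ _ (by field_simp; simp [hc]))
  · obtain ⟨x, hx⟩ := exists_eval_caseC1Poly_graph_ne_zero c21 c12 h10 h01 h11 (-b / c) (-a / c)
    exact hx (hvanish _ _ (by field_simp; ring))

theorem caseC1Poly_ne_mul [NeZero (2 : K)] (h10 : c10 ≠ 0) (h01 : c01 ≠ 0) (h11 : c11 ≠ 0)
    {A B : MvPolynomial (Fin 2) K} (hA : A.totalDegree ≠ 0) (hB : B.totalDegree ≠ 0) :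
    caseC1Poly c10 c01 c21 c12 c11 ≠ A * B := by
  intro hAB
  have hA0 : A ≠ 0 := by rintro rfl; simp at hA
  have hB0 : B ≠ 0 := by rintro rfl; simp at hB
  have hdeg : A.totalDegree + B.totalDegree ≤ 3 := by
    rw [← totalDegree_mul_of_isDomain hA0 hB0, ← hAB]
    exact totalDegree_caseC1Poly_le _ _ _ _ _
  rcases (by omega : A.totalDegree = 1 ∨ B.totalDegree = 1) with h | h
  · exact totalDegree_ne_one_of_dvd_caseC1Poly c21 c12 h10 h01 h11 (Dvd.intro B hAB.symm) h
  · exact totalDegree_ne_one_of_dvd_caseC1Poly c21 c12 h10 h01 h11 (Dvd.intro_left A hAB.symm) h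

end CaseC1

theorem stmt_15_general (a1 a2 b0 : ℂ) (a0 : ℝ)
    (ha1 : a1 ≠ 0) (ha2 : a2 ≠ 0)
    (E : ℝ) (hE : E ≠ 0)
    (hcoef : -(‖b0‖) ^ 2 - a0 * E + E ^ 2 ≠ 0) :
    ¬ ∃ A B : MvPolynomial (Fin 2) ℂ,
      (C (-(starRingEnd ℂ) a2 * (E : ℂ)) * X 0
        + C (-(starRingEnd ℂ) a1 * (E : ℂ)) * X 1
        + C (-a1 * (E : ℂ)) * X 0 ^ 2 * X 1
        + C (-a2 * (E : ℂ)) * X 0 * X 1 ^ 2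
        + C ((-(‖b0‖) ^ 2 - a0 * E + E ^ 2 : ℝ) : ℂ) * X 0 * X 1)
        = A * B ∧ A.totalDegree ≠ 0 ∧ B.totalDegree ≠ 0 := by
  rintro ⟨A, B, hAB, hA, hB⟩
  have hE' : (E : ℂ) ≠ 0 := ofReal_ne_zero.mpr hE
  exact caseC1Poly_ne_mul _ _ (mul_ne_zero (by simpa using ha2) hE')
    (mul_ne_zero (by simpa using ha1) hE') (ofReal_ne_zero.mpr hcoef) hA hB hAB

/-- Case C1: for every real E ≠ 0 with −|b0|² − a0E + E² ≠ 0, the dispersion polynomial P_c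
is irreducible: it admits no factorization into two nonconstant polynomials. -/
theorem stmt_15 (a1 a2 b0 : ℂ) (a0 : ℝ)
    (ha1 : a1 ≠ 0) (ha2 : a2 ≠ 0) (hb0 : b0 ≠ 0)
    (E : ℝ) (hE : E ≠ 0)
    (hcoef : -(‖b0‖) ^ 2 - a0 * E + E ^ 2 ≠ 0) :
    ¬ ∃ A B : MvPolynomial (Fin 2) ℂ,
      (C (-(starRingEnd ℂ) a2 * (E : ℂ)) * X 0
        + C (-(starRingEnd ℂ) a1 * (E : ℂ)) * X 1
        + C (-a1 * (E : ℂ)) * X 0 ^ 2 * X 1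
        + C (-a2 * (E : ℂ)) * X 0 * X 1 ^ 2
        + C ((-(‖b0‖) ^ 2 - a0 * E + E ^ 2 : ℝ) : ℂ) * X 0 * X 1)
        = A * B ∧ A.totalDegree ≠ 0 ∧ B.totalDegree ≠ 0 :=
  stmt_15_general a1 a2 b0 a0 ha1 ha2 E hE hcoef
end
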